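/- arXiv:2102.04633 — 5 statements merged into one kernel-verified Lean document; each statement's English description precedes it below -/
import Mathlib

section
/- Let α be a type, k ≥ 1, and let R : (Fin (k+1) → α) → Prop be a (k+1)-ary relation satisfying sub-reflexivity, perm-invariance, and k-transitivity (i.e., R is a k-equivalence relation). Then the k-predicate Φ_R satisfies k-transitivity on finite sets: for all finite sets X, Y ⊆ α, if Φ_R(X) and Φ_R(Y) and |X ∩ Y| ≥ k, then Φ_R(X ∪ Y). -/
/-- The `k`-predicate `Φ_R` of a `(k+1)`-ary relation `R`: it holds of a finite set `X`
iff `R` holds of every `(k+1)`-tuple all of whose entries lie in `X`. -/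
def KPred {α : Type*} {k : ℕ} (R : (Fin (k + 1) → α) → Prop) (X : Finset α) : Prop :=
  ∀ x : Fin (k + 1) → α, (∀ i, x i ∈ X) → R x

/-- There is a permutation sending `a ↦ c` and `b ↦ d` as soon as `a ≠ b`, `c ≠ d`. -/
lemma exists_perm_two {n : ℕ} (a b c d : Fin n) (hab : a ≠ b) (hcd : c ≠ d) :
    ∃ π : Equiv.Perm (Fin n), π a = c ∧ π b = d := by
  set σ := Equiv.swap a c with hσ
  have hσa : σ a = c := Equiv.swap_apply_left a c
  have hσb : σ b ≠ c := by
    rcases eq_or_ne b c with rfl | hbc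
    · rw [hσ, Equiv.swap_apply_right]
      exact hab
    · rw [hσ, Equiv.swap_apply_of_ne_of_ne hab.symm hbc]
      exact hbc
  refine ⟨σ.trans (Equiv.swap (σ b) d), ?_, ?_⟩
  · simp only [Equiv.trans_apply, hσa]
    exact Equiv.swap_apply_of_ne_of_ne (Ne.symm hσb) hcd
  · simp only [Equiv.trans_apply]
    exact Equiv.swap_apply_left _ _

/-- Permutation closure: if `R x` and every entry of `y` is an entry of `x` (with `y`
injective), then `R y`. -/
lemma perm_closure {α : Type*} {k : ℕ} (R : (Fin (k + 1) → α) → Prop)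
    (hperm : ∀ (x : Fin (k + 1) → α) (π : Equiv.Perm (Fin (k + 1))), R x → R (x ∘ π))
    {x y : Fin (k + 1) → α} (hy : Function.Injective y)
    (h : ∀ i, ∃ j, x j = y i) (hR : R x) : R y := by
  choose f hf using h
  have hfinj : Function.Injective f := by
    intro a b hab
    apply hy
    rw [← hf a, ← hf b, hab]
  have hbij := Finite.injective_iff_bijective.mp hfinj
  have hyx : y = x ∘ (Equiv.ofBijective f hbij) := by
    funext i
    simp only [Function.comp_apply, Equiv.ofBijective_apply]
    exact (hf i).symm
  rw [hyx]
  exact hperm x _ hR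

/-- Injectivity of updating one coordinate with a fresh value. -/
lemma update_inj {α : Type*} [DecidableEq α] {k : ℕ} {x : Fin (k + 1) → α}
    (hx : Function.Injective x) {v : α} (hv : ∀ l, v ≠ x l) (m : Fin (k + 1)) :
    Function.Injective (Function.update x m v) := by
  intro a b hab
  rcases eq_or_ne a m with ha | ha
  · rcases eq_or_ne b m with hb | hb
    · rw [ha, hb]
    · rw [ha, Function.update_self, Function.update_of_ne hb] at hab
      exact absurd hab (hv b)
  · rcases eq_or_ne b m with hb | hb
    · rw [hb, Function.update_of_ne ha, Function.update_self] at hab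
      exact absurd hab.symm (hv a)
    · rw [Function.update_of_ne ha, Function.update_of_ne hb] at hab
      exact hx hab

/-- Exchange lemma: `R x` follows from `R (x[i := v])` and `R (x[j := v])` for a fresh `v`. -/
lemma rep_lemma {α : Type*} [DecidableEq α] {k : ℕ} (hk : 1 ≤ k)
    (R : (Fin (k + 1) → α) → Prop)
    (hperm : ∀ (x : Fin (k + 1) → α) (π : Equiv.Perm (Fin (k + 1))), R x → R (x ∘ π))
    (htrans : ∀ (x : Fin (k + 1) → α) (y₂ : α),
      (∀ i j : Fin k, x i.castSucc = x j.castSucc → i = j) →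
      R x → R (Fin.snoc (fun i : Fin k => x i.castSucc) y₂) →
      R (Fin.snoc (fun i : Fin k => x i.succ) y₂))
    {x : Fin (k + 1) → α} (hx : Function.Injective x)
    {i j : Fin (k + 1)} (hij : i ≠ j) {v : α} (hv : ∀ l, v ≠ x l)
    (h1 : R (Function.update x i v)) (h2 : R (Function.update x j v)) : R x := by
  have h0last : (0 : Fin (k + 1)) ≠ Fin.last k := by
    intro h
    have := congrArg Fin.val h
    simp [Fin.last] at this
    omega
  obtain ⟨π, hπ0, hπlast⟩ := exists_perm_two (0 : Fin (k + 1)) (Fin.last k) j i h0last hij.symm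
  set t : Fin (k + 1) → α := (Function.update x j v) ∘ π with ht
  have htinj : Function.Injective t := (update_inj hx hv j).comp π.injective
  have ht0 : t 0 = v := by
    rw [ht, Function.comp_apply, hπ0, Function.update_self]
  have htlast : t (Fin.last k) = x i := by
    rw [ht, Function.comp_apply, hπlast, Function.update_of_ne hij]
  -- every value of t is either v or some x l with l ≠ j
  have htval : ∀ m, t m = v ∨ ∃ l, l ≠ j ∧ t m = x l := by
    intro m
    rcases eq_or_ne (π m) j with hm | hm
    · left; rw [ht, Function.comp_apply, hm, Function.update_self]
    · right; exact ⟨π m, hm, by rw [ht, Function.comp_apply, Function.update_of_ne hm]⟩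
  have hxj_not_t : ∀ m, t m ≠ x j := by
    intro m
    rcases htval m with h | ⟨l, hl, h⟩
    · rw [h]; exact hv j
    · rw [h]; exact fun e => hl (hx e)
  have hcastinj : ∀ a b : Fin k, t a.castSucc = t b.castSucc → a = b := by
    intro a b hab
    exact Fin.castSucc_injective k (htinj hab)
  have hRt : R t := hperm _ π h2
  -- the snoc premise
  have hsnoc : R (Fin.snoc (fun m : Fin k => t m.castSucc) (x j)) := by
    refine perm_closure R hperm ?_ ?_ h1
    · -- injectivity of the snoc tuple
      intro a b hab
      induction a using Fin.lastCases with
      | last =>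
        induction b using Fin.lastCases with
        | last => rfl
        | cast b =>
          rw [Fin.snoc_last, Fin.snoc_castSucc] at hab
          exact absurd hab.symm (hxj_not_t _)
      | cast a =>
        induction b using Fin.lastCases with
        | last =>
          rw [Fin.snoc_last, Fin.snoc_castSucc] at hab
          exact absurd hab (hxj_not_t _)
        | cast b =>
          rw [Fin.snoc_castSucc, Fin.snoc_castSucc] at hab
          rw [Fin.castSucc_injective k (htinj hab)]
    · -- entries come from update x i v
      intro a
      induction a using Fin.lastCases with
      | last =>
        refine ⟨j, ?_⟩
        rw [Fin.snoc_last, Function.update_of_ne (Ne.symm hij)]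
      | cast a =>
        rw [Fin.snoc_castSucc]
        have hane : π a.castSucc ≠ i := by
          intro h
          rw [← hπlast] at h
          have := π.injective h
          exact absurd this (Fin.castSucc_lt_last a).ne
        rcases eq_or_ne (π a.castSucc) j with hm | hm
        · refine ⟨i, ?_⟩
          rw [Function.update_self, ht, Function.comp_apply, hm, Function.update_self]
        · refine ⟨π a.castSucc, ?_⟩
          rw [Function.update_of_ne hane, ht, Function.comp_apply,
            Function.update_of_ne hm]
  have hconc := htrans t (x j) hcastinj hRt hsnoc
  -- now transfer back to x
  refine perm_closure R hperm hx ?_ hconc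
  intro a
  rcases eq_or_ne a j with rfl | haj
  · exact ⟨Fin.last k, by rw [Fin.snoc_last]⟩
  · have hne0 : π.symm a ≠ 0 := by
      intro h
      apply haj
      have : a = π 0 := by rw [← h, Equiv.apply_symm_apply]
      rw [this, hπ0]
    refine ⟨Fin.castSucc ((π.symm a).pred hne0), ?_⟩
    rw [Fin.snoc_castSucc, Fin.succ_pred, ht, Function.comp_apply, Equiv.apply_symm_apply,
      Function.update_of_ne haj]

/-- If `R` is a `k`-equivalence relation (sub-reflexive, perm-invariant and `k`-transitive),
then its `k`-predicate `Φ_R` is `k`-transitive on finite sets: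
`Φ_R X`, `Φ_R Y` and `|X ∩ Y| ≥ k` imply `Φ_R (X ∪ Y)`. -/
theorem kpred_trans {α : Type*} [DecidableEq α] {k : ℕ} (hk : 1 ≤ k)
    (R : (Fin (k + 1) → α) → Prop)
    (hsubrefl : ∀ x : Fin (k + 1) → α, ¬ Function.Injective x → R x)
    (hperm : ∀ (x : Fin (k + 1) → α) (π : Equiv.Perm (Fin (k + 1))), R x → R (x ∘ π))
    (htrans : ∀ (x : Fin (k + 1) → α) (y₂ : α),
      (∀ i j : Fin k, x i.castSucc = x j.castSucc → i = j) →
      R x → R (Fin.snoc (fun i : Fin k => x i.castSucc) y₂) →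
      R (Fin.snoc (fun i : Fin k => x i.succ) y₂))
    (X Y : Finset α) (hX : KPred R X) (hY : KPred R Y) (hXY : k ≤ (X ∩ Y).card) :
    KPred R (X ∪ Y) := by
  have main : ∀ (n : ℕ) (x : Fin (k + 1) → α), (∀ i, x i ∈ X ∪ Y) →
      (Finset.univ.filter (fun l => x l ∉ X)).card +
        (Finset.univ.filter (fun l => x l ∉ Y)).card = n → R x := by
    intro n
    induction n using Nat.strong_induction_on with
    | _ n ih =>
      intro x hmem hn
      by_cases hinj : Function.Injective x
      · by_cases hp : (Finset.univ.filter (fun l => x l ∉ X)).card = 0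
        · apply hX
          intro l
          by_contra hl
          have hmem' : l ∈ Finset.univ.filter (fun l => x l ∉ X) := by
            simp [Finset.mem_filter, hl]
          rw [Finset.card_eq_zero] at hp
          rw [hp] at hmem'
          exact absurd hmem' (Finset.notMem_empty l)
        · by_cases hq : (Finset.univ.filter (fun l => x l ∉ Y)).card = 0
          · apply hY
            intro l
            by_contra hl
            have hmem' : l ∈ Finset.univ.filter (fun l => x l ∉ Y) := by
              simp [Finset.mem_filter, hl]
            rw [Finset.card_eq_zero] at hq
            rw [hq] at hmem'
            exact absurd hmem' (Finset.notMem_empty l)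
          · obtain ⟨i, hi⟩ := Finset.card_pos.mp (Nat.pos_of_ne_zero hp)
            obtain ⟨j, hj⟩ := Finset.card_pos.mp (Nat.pos_of_ne_zero hq)
            have hiX : x i ∉ X := by simpa using (Finset.mem_filter.mp hi).2
            have hjY : x j ∉ Y := by simpa using (Finset.mem_filter.mp hj).2
            have hij : i ≠ j := by
              rintro rfl
              rcases Finset.mem_union.mp (hmem i) with h | h
              · exact hiX h
              · exact hjY h
            -- choose a fresh v ∈ X ∩ Y
            have hcard2 : ({i, j} : Finset (Fin (k + 1))).card = 2 := by
              rw [Finset.card_insert_of_notMem (by simp [hij]), Finset.card_singleton]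
            have himg : (Finset.image x (Finset.univ \ {i, j})).card < (X ∩ Y).card := by
              have h1 : (Finset.image x (Finset.univ \ {i, j})).card ≤
                  ((Finset.univ : Finset (Fin (k + 1))) \ {i, j}).card :=
                Finset.card_image_le
              have h2 : ((Finset.univ : Finset (Fin (k + 1))) \ {i, j}).card = k + 1 - 2 := by
                rw [Finset.card_sdiff_of_subset (Finset.subset_univ _), hcard2, Finset.card_univ,
                  Fintype.card_fin]
              omega
            have hns : ¬ (X ∩ Y ⊆ Finset.image x (Finset.univ \ {i, j})) := fun h =>
              absurd (Finset.card_le_card h) (by omega)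
            obtain ⟨v, hvXY, hvimg⟩ := Finset.not_subset.mp hns
            obtain ⟨hvX, hvY⟩ := Finset.mem_inter.mp hvXY
            have hv : ∀ l, v ≠ x l := by
              intro l hvl
              rcases eq_or_ne l i with rfl | hli
              · exact hiX (hvl ▸ hvX)
              · rcases eq_or_ne l j with rfl | hlj
                · exact hjY (hvl ▸ hvY)
                · exact hvimg (Finset.mem_image.mpr ⟨l, by simp [hli, hlj], hvl.symm⟩)
            -- first premise : update at i
            have hmem1 : ∀ l, Function.update x i v l ∈ X ∪ Y := by
              intro l
              rcases eq_or_ne l i with rfl | hl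
              · rw [Function.update_self]; exact Finset.mem_union_left _ hvX
              · rw [Function.update_of_ne hl]; exact hmem l
            have hpsub1 : Finset.univ.filter (fun l => Function.update x i v l ∉ X) ⊆
                Finset.univ.filter (fun l => x l ∉ X) := by
              intro l hl
              have hl' : Function.update x i v l ∉ X := by
                simpa using (Finset.mem_filter.mp hl).2
              rcases eq_or_ne l i with rfl | hne
              · rw [Function.update_self] at hl'; exact absurd hvX hl'
              · rw [Function.update_of_ne hne] at hl'
                simp [Finset.mem_filter, hl']
            have hp1 : (Finset.univ.filter (fun l => Function.update x i v l ∉ X)).card <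
                (Finset.univ.filter (fun l => x l ∉ X)).card := by
              apply Finset.card_lt_card
              rw [Finset.ssubset_iff_of_subset hpsub1]
              refine ⟨i, hi, ?_⟩
              simp [Finset.mem_filter, Function.update_self, hvX]
            have hq1 : (Finset.univ.filter (fun l => Function.update x i v l ∉ Y)).card ≤
                (Finset.univ.filter (fun l => x l ∉ Y)).card := by
              apply Finset.card_le_card
              intro l hl
              have hl' : Function.update x i v l ∉ Y := by
                simpa using (Finset.mem_filter.mp hl).2
              rcases eq_or_ne l i with rfl | hne
              · rw [Function.update_self] at hl'; exact absurd hvY hl'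
              · rw [Function.update_of_ne hne] at hl'
                simp [Finset.mem_filter, hl']
            have h1 : R (Function.update x i v) :=
              ih _ (by omega) _ hmem1 rfl
            -- second premise : update at j
            have hmem2 : ∀ l, Function.update x j v l ∈ X ∪ Y := by
              intro l
              rcases eq_or_ne l j with rfl | hl
              · rw [Function.update_self]; exact Finset.mem_union_left _ hvX
              · rw [Function.update_of_ne hl]; exact hmem l
            have hqsub2 : Finset.univ.filter (fun l => Function.update x j v l ∉ Y) ⊆
                Finset.univ.filter (fun l => x l ∉ Y) := by
              intro l hl
              have hl' : Function.update x j v l ∉ Y := by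
                simpa using (Finset.mem_filter.mp hl).2
              rcases eq_or_ne l j with rfl | hne
              · rw [Function.update_self] at hl'; exact absurd hvY hl'
              · rw [Function.update_of_ne hne] at hl'
                simp [Finset.mem_filter, hl']
            have hq2 : (Finset.univ.filter (fun l => Function.update x j v l ∉ Y)).card <
                (Finset.univ.filter (fun l => x l ∉ Y)).card := by
              apply Finset.card_lt_card
              rw [Finset.ssubset_iff_of_subset hqsub2]
              refine ⟨j, hj, ?_⟩
              simp [Finset.mem_filter, Function.update_self, hvY]
            have hp2 : (Finset.univ.filter (fun l => Function.update x j v l ∉ X)).card ≤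
                (Finset.univ.filter (fun l => x l ∉ X)).card := by
              apply Finset.card_le_card
              intro l hl
              have hl' : Function.update x j v l ∉ X := by
                simpa using (Finset.mem_filter.mp hl).2
              rcases eq_or_ne l j with rfl | hne
              · rw [Function.update_self] at hl'; exact absurd hvX hl'
              · rw [Function.update_of_ne hne] at hl'
                simp [Finset.mem_filter, hl']
            have h2 : R (Function.update x j v) :=
              ih _ (by omega) _ hmem2 rfl
            exact rep_lemma hk R hperm htrans hinj hij hv h1 h2
      · exact hsubrefl x hinj
  intro x hx
  exact main _ x hx rfl
end

section
/- Let α be a type, k ≥ 1, and let R : (Fin (k+1) → α) → Prop be a (k+1)-ary relation satisfying sub-reflexivity, perm-invariance, and k-transitivity (i.e., R is a k-equivalence relation). Define the k-function φ_R on finite sets x of cardinality k by φ_R(x) = { y : α | Φ_R(x ∪ {y}) }. Then for any two finite sets x₁, x₂ ⊆ α with |x₁| = |x₂| = k, φ_R(x₁) = φ_R(x₂) if and only if Φ_R(x₁ ∪ x₂). -/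
/-- The `k`-function `φ_R` induced by the `k`-predicate `Φ_R`, defined on finite sets `x`
(of cardinality `k`) by `φ_R x = { y | Φ_R (x ∪ {y}) }`. -/
def KFun {α : Type*} [DecidableEq α] {k : ℕ} (R : (Fin (k + 1) → α) → Prop)
    (x : Finset α) : Set α :=
  { y : α | KPred R (x ∪ {y}) }

section Aux
set_option linter.unusedSectionVars false

variable {α : Type*} [DecidableEq α] {k : ℕ} {R : (Fin (k + 1) → α) → Prop}

lemma union_singleton' {s : Finset α} {a : α} : s ∪ {a} = insert a s := by
  rw [Finset.union_comm, ← Finset.insert_eq]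

lemma kpred_mono {X Y : Finset α} (h : X ⊆ Y) (hY : KPred R Y) : KPred R X :=
  fun t ht => hY t fun i => h (ht i)

lemma kpred_of_card_le
    (hsubrefl : ∀ x : Fin (k + 1) → α, ¬ Function.Injective x → R x)
    {X : Finset α} (h : X.card ≤ k) : KPred R X := by
  intro t ht
  refine hsubrefl t fun hinj => ?_
  have h1 : (Finset.univ.image t).card = k + 1 := by
    rw [Finset.card_image_of_injective _ hinj, Finset.card_univ, Fintype.card_fin]
  have h2 : Finset.univ.image t ⊆ X := by
    intro a ha
    obtain ⟨i, -, rfl⟩ := Finset.mem_image.mp ha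
    exact ht i
  have := Finset.card_le_card h2
  omega

lemma r_of_range_eq
    (hperm : ∀ (x : Fin (k + 1) → α) (π : Equiv.Perm (Fin (k + 1))), R x → R (x ∘ π))
    {t u : Fin (k + 1) → α} (ht : Function.Injective t) (hu : Function.Injective u)
    (hr : Set.range t = Set.range u) (h : R u) : R t := by
  let π : Fin (k + 1) ≃ Fin (k + 1) :=
    (Equiv.ofInjective t ht).trans ((Equiv.setCongr hr).trans (Equiv.ofInjective u hu).symm)
  have hut : u ∘ π = t := by
    funext i
    simp [π, Equiv.apply_ofInjective_symm]
  rw [← hut]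
  exact hperm u π h

/-- Exchange lemma: if `|X| = k` and `Φ(X ∪ {a})`, `Φ(X ∪ {b})` then `Φ(X ∪ {a, b})`. -/
lemma kpred_exchange (hk : 1 ≤ k)
    (hsubrefl : ∀ x : Fin (k + 1) → α, ¬ Function.Injective x → R x)
    (hperm : ∀ (x : Fin (k + 1) → α) (π : Equiv.Perm (Fin (k + 1))), R x → R (x ∘ π))
    (htrans : ∀ (x : Fin (k + 1) → α) (y₂ : α),
      (∀ i j : Fin k, x i.castSucc = x j.castSucc → i = j) →
      R x → R (Fin.snoc (fun i : Fin k => x i.castSucc) y₂) →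
      R (Fin.snoc (fun i : Fin k => x i.succ) y₂))
    {X : Finset α} (hX : X.card = k) {a b : α}
    (ha : KPred R (insert a X)) (hb : KPred R (insert b X)) :
    KPred R (insert a (insert b X)) := by
  by_cases hab : a = b
  · subst hab
    rwa [Finset.insert_idem]
  by_cases haX : a ∈ X
  · rwa [Finset.insert_comm, Finset.insert_eq_self.mpr haX]
  by_cases hbX : b ∈ X
  · rwa [Finset.insert_eq_self.mpr hbX]
  intro t ht
  by_cases hinj : Function.Injective t
  swap
  · exact hsubrefl t hinj
  set T : Finset α := Finset.univ.image t with hTdef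
  have hTcard : T.card = k + 1 := by
    rw [hTdef, Finset.card_image_of_injective _ hinj, Finset.card_univ, Fintype.card_fin]
  have hTsub : T ⊆ insert a (insert b X) := by
    intro x hx
    obtain ⟨i, -, rfl⟩ := Finset.mem_image.mp hx
    exact ht i
  by_cases haT : a ∈ T
  swap
  · refine hb t fun i => ?_
    have hti : t i ∈ T := Finset.mem_image.mpr ⟨i, Finset.mem_univ i, rfl⟩
    have := ht i
    rcases Finset.mem_insert.mp this with h | h
    · exact absurd (h ▸ hti) haT
    · exact h
  by_cases hbT : b ∈ T
  swap
  · refine ha t fun i => ?_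
    have hti : t i ∈ T := Finset.mem_image.mpr ⟨i, Finset.mem_univ i, rfl⟩
    rcases Finset.mem_insert.mp (ht i) with h | h
    · exact Finset.mem_insert.mpr (Or.inl h)
    · rcases Finset.mem_insert.mp h with h' | h'
      · exact absurd (h' ▸ hti) hbT
      · exact Finset.mem_insert.mpr (Or.inr h')
  -- both a, b occur among the entries of t; find c ∈ X not occurring
  have hXT : (X \ T).Nonempty := by
    by_contra hcon
    rw [Finset.not_nonempty_iff_eq_empty, Finset.sdiff_eq_empty_iff_subset] at hcon
    have hsub2 : insert a (insert b X) ⊆ T := by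
      intro x hx
      rcases Finset.mem_insert.mp hx with h | h
      · exact h ▸ haT
      · rcases Finset.mem_insert.mp h with h' | h'
        · exact h' ▸ hbT
        · exact hcon h'
    have hc2 : (insert a (insert b X)).card = k + 2 := by
      rw [Finset.card_insert_of_notMem (by simp [haX, hab]),
        Finset.card_insert_of_notMem hbX, hX]
    have := Finset.card_le_card hsub2
    omega
  obtain ⟨c, hc⟩ := hXT
  have hcX : c ∈ X := (Finset.mem_sdiff.mp hc).1
  have hcT : c ∉ T := (Finset.mem_sdiff.mp hc).2
  -- enumerate X with first element c
  haveI : NeZero k := ⟨by omega⟩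
  let E : X ≃ Fin k := X.equivFinOfCardEq hX
  let σ : Equiv.Perm (Fin k) := Equiv.swap 0 (E ⟨c, hcX⟩)
  let e : Fin k → α := fun i => ((E.symm (σ i)) : α)
  have he0 : e 0 = c := by
    simp [e, σ, Equiv.swap_apply_left]
  have heX : ∀ i, e i ∈ X := fun i => (E.symm (σ i)).2
  have heinj : Function.Injective e := by
    intro i j hij
    exact σ.injective (E.symm.injective (Subtype.coe_injective hij))
  let u : Fin (k + 1) → α := Fin.snoc e a
  have hupre : ∀ i j : Fin k, u i.castSucc = u j.castSucc → i = j := by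
    intro i j hij
    apply heinj
    simpa [u, Fin.snoc_castSucc] using hij
  have huX : ∀ i, u i ∈ insert a X := by
    intro i
    refine Fin.lastCases ?_ ?_ i
    · simp [u, Fin.snoc_last]
    · intro m
      simp only [u, Fin.snoc_castSucc]
      exact Finset.mem_insert.mpr (Or.inr (heX m))
  have hRu : R u := ha u huX
  have hRu2 : R (Fin.snoc (fun i : Fin k => u i.castSucc) b) := by
    have hfe : (fun i : Fin k => u i.castSucc) = e := by
      funext i; simp [u, Fin.snoc_castSucc]
    rw [hfe]
    refine hb _ fun i => ?_
    refine Fin.lastCases ?_ ?_ i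
    · simp [Fin.snoc_last]
    · intro m
      simp only [Fin.snoc_castSucc]
      exact Finset.mem_insert.mpr (Or.inr (heX m))
  have hRv : R (Fin.snoc (fun i : Fin k => u i.succ) b) := htrans u b hupre hRu hRu2
  set v : Fin (k + 1) → α := Fin.snoc (fun i : Fin k => u i.succ) b with hvdef
  set S : Finset α := insert a (insert b (X.erase c)) with hSdef
  have hbe : b ∉ X.erase c := fun h => hbX (Finset.mem_of_mem_erase h)
  have hae : a ∉ insert b (X.erase c) := by
    simp only [Finset.mem_insert]
    rintro (h | h)
    · exact hab h
    · exact haX (Finset.mem_of_mem_erase h)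
  have hScard : S.card = k + 1 := by
    rw [hSdef, Finset.card_insert_of_notMem hae, Finset.card_insert_of_notMem hbe,
      Finset.card_erase_of_mem hcX, hX]
    omega
  have hTS : T ⊆ S := by
    intro x hx
    have hxc : x ≠ c := fun h => hcT (h ▸ hx)
    rcases Finset.mem_insert.mp (hTsub hx) with h | h
    · exact Finset.mem_insert.mpr (Or.inl h)
    · rcases Finset.mem_insert.mp h with h' | h'
      · exact Finset.mem_insert.mpr (Or.inr (Finset.mem_insert.mpr (Or.inl h')))
      · exact Finset.mem_insert.mpr (Or.inr (Finset.mem_insert.mpr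
          (Or.inr (Finset.mem_erase.mpr ⟨hxc, h'⟩))))
  have hTeqS : T = S := Finset.eq_of_subset_of_card_le hTS (by omega)
  -- entries of v lie in S
  have hvS : ∀ i, v i ∈ S := by
    intro i
    refine Fin.lastCases ?_ ?_ i
    · simp only [hvdef, Fin.snoc_last]
      exact Finset.mem_insert.mpr (Or.inr (Finset.mem_insert_self b _))
    · intro m
      simp only [hvdef, Fin.snoc_castSucc]
      by_cases hm : (m : ℕ) + 1 = k
      · have hms : m.succ = Fin.last k := by
          apply Fin.ext; simpa using hm
        rw [hms]
        simp only [u, Fin.snoc_last]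
        exact Finset.mem_insert_self a _
      · have hlt : (m : ℕ) + 1 < k := lt_of_le_of_ne m.2 hm
        have hms : m.succ = Fin.castSucc ⟨(m : ℕ) + 1, hlt⟩ := by
          apply Fin.ext; simp
        rw [hms]
        simp only [u, Fin.snoc_castSucc]
        have hj0 : (⟨(m : ℕ) + 1, hlt⟩ : Fin k) ≠ 0 := by
          intro h
          have := congrArg Fin.val h
          simp at this
        have hne : e ⟨(m : ℕ) + 1, hlt⟩ ≠ c := by
          rw [← he0]
          exact fun h => hj0 (heinj h)
        exact Finset.mem_insert.mpr (Or.inr (Finset.mem_insert.mpr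
          (Or.inr (Finset.mem_erase.mpr ⟨hne, heX _⟩))))
  have hSv : S ⊆ Finset.univ.image v := by
    intro s hs
    rcases Finset.mem_insert.mp hs with h | h
    · -- s = a
      subst h
      refine Finset.mem_image.mpr ⟨Fin.castSucc ⟨k - 1, by omega⟩, Finset.mem_univ _, ?_⟩
      simp only [hvdef, Fin.snoc_castSucc]
      have : (⟨k - 1, by omega⟩ : Fin k).succ = Fin.last k := by
        apply Fin.ext; simp; omega
      rw [this]
      simp [u, Fin.snoc_last]
    · rcases Finset.mem_insert.mp h with h' | h'
      · -- s = b
        subst h'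
        exact Finset.mem_image.mpr ⟨Fin.last k, Finset.mem_univ _, by simp [hvdef, Fin.snoc_last]⟩
      · -- s ∈ X.erase c
        have hsX : s ∈ X := Finset.mem_of_mem_erase h'
        have hsc : s ≠ c := (Finset.mem_erase.mp h').1
        set j : Fin k := σ.symm (E ⟨s, hsX⟩) with hjdef
        have hej : e j = s := by
          simp [e, hjdef]
        have hj0 : j ≠ 0 := by
          intro h
          apply hsc
          rw [← hej, h, he0]
        have hjval : 1 ≤ (j : ℕ) := by
          rcases Nat.eq_zero_or_pos (j : ℕ) with h | h
          · exact absurd (Fin.ext h) hj0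
          · omega
        refine Finset.mem_image.mpr ⟨Fin.castSucc ⟨(j : ℕ) - 1, by omega⟩, Finset.mem_univ _, ?_⟩
        simp only [hvdef, Fin.snoc_castSucc]
        have : (⟨(j : ℕ) - 1, by omega⟩ : Fin k).succ = Fin.castSucc j := by
          apply Fin.ext; simp; omega
        rw [this]
        simp only [u, Fin.snoc_castSucc]
        exact hej
  have himv : Finset.univ.image v ⊆ S := by
    intro s hs
    obtain ⟨i, -, rfl⟩ := Finset.mem_image.mp hs
    exact hvS i
  have himveq : Finset.univ.image v = S := Finset.Subset.antisymm himv hSv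
  have hvinj : Function.Injective v := by
    have hcard : (Finset.univ.image v).card = (Finset.univ : Finset (Fin (k + 1))).card := by
      rw [himveq, hScard, Finset.card_fin]
    have := Finset.card_image_iff.mp hcard
    rw [Finset.coe_univ] at this
    exact fun i j h => this (Set.mem_univ i) (Set.mem_univ j) h
  have hrange : Set.range t = Set.range v := by
    rw [← Set.image_univ, ← Set.image_univ, ← Finset.coe_univ, ← Finset.coe_image,
      ← Finset.coe_image, ← hTdef, himveq, hTeqS]
  exact r_of_range_eq hperm hinj hvinj hrange hRv

/-- Transport lemma: inside a set `U` with `Φ(U)`, the property `Φ(X ∪ {y})`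
transfers between `k`-subsets of `U`. -/
lemma kpred_transport (hk : 1 ≤ k)
    (hsubrefl : ∀ x : Fin (k + 1) → α, ¬ Function.Injective x → R x)
    (hperm : ∀ (x : Fin (k + 1) → α) (π : Equiv.Perm (Fin (k + 1))), R x → R (x ∘ π))
    (htrans : ∀ (x : Fin (k + 1) → α) (y₂ : α),
      (∀ i j : Fin k, x i.castSucc = x j.castSucc → i = j) →
      R x → R (Fin.snoc (fun i : Fin k => x i.castSucc) y₂) →
      R (Fin.snoc (fun i : Fin k => x i.succ) y₂))
    {U : Finset α} (hU : KPred R U) :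
    ∀ (n : ℕ) (X Y : Finset α), X ⊆ U → Y ⊆ U → X.card = k → Y.card = k →
      (Y \ X).card = n → ∀ y, KPred R (insert y X) → KPred R (insert y Y) := by
  intro n
  induction n with
  | zero =>
    intro X Y hXU hYU hX hY hcard y hyX
    have hsub : Y ⊆ X := by
      rwa [Finset.card_eq_zero, Finset.sdiff_eq_empty_iff_subset] at hcard
    have hXY : Y = X := Finset.eq_of_subset_of_card_le hsub (by omega)
    rwa [hXY]
  | succ n ih =>
    intro X Y hXU hYU hX hY hcard y hyX
    have hne : (Y \ X).Nonempty := by rw [← Finset.card_pos]; omega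
    obtain ⟨b, hb⟩ := hne
    have hbY : b ∈ Y := (Finset.mem_sdiff.mp hb).1
    have hbX : b ∉ X := (Finset.mem_sdiff.mp hb).2
    have hne2 : (X \ Y).Nonempty := by
      by_contra h
      rw [Finset.not_nonempty_iff_eq_empty, Finset.sdiff_eq_empty_iff_subset] at h
      have hXY : X = Y := Finset.eq_of_subset_of_card_le h (by omega)
      exact hbX (hXY ▸ hbY)
    obtain ⟨c, hc⟩ := hne2
    have hcX : c ∈ X := (Finset.mem_sdiff.mp hc).1
    have hcY : c ∉ Y := (Finset.mem_sdiff.mp hc).2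
    -- Φ(X ∪ {b}) from Φ(U)
    have hXb : KPred R (insert b X) :=
      kpred_mono (Finset.insert_subset (hYU hbY) hXU) hU
    -- exchange: Φ(X ∪ {y, b})
    have hXyb : KPred R (insert y (insert b X)) :=
      kpred_exchange hk hsubrefl hperm htrans hX hyX hXb
    set X' : Finset α := insert b (X.erase c) with hX'def
    have hX'sub : insert y X' ⊆ insert y (insert b X) := by
      apply Finset.insert_subset_insert
      apply Finset.insert_subset_insert
      exact Finset.erase_subset c X
    have hyX' : KPred R (insert y X') := kpred_mono hX'sub hXyb
    have hX'U : X' ⊆ U := by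
      apply Finset.insert_subset (hYU hbY)
      exact (Finset.erase_subset c X).trans hXU
    have hbe : b ∉ X.erase c := fun h => hbX (Finset.mem_of_mem_erase h)
    have hX'card : X'.card = k := by
      rw [hX'def, Finset.card_insert_of_notMem hbe, Finset.card_erase_of_mem hcX, hX]
      omega
    have hsd : Y \ X' = (Y \ X).erase b := by
      ext x
      simp only [hX'def, Finset.mem_sdiff, Finset.mem_insert, Finset.mem_erase,
        Finset.mem_sdiff, not_or, not_and]
      constructor
      · rintro ⟨hxY, hxb, hxe⟩
        have hxc : x ≠ c := fun h => hcY (h ▸ hxY)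
        exact ⟨hxb, hxY, fun hxX => absurd (hxe hxc) (fun h => h hxX)⟩
      · rintro ⟨hxb, hxY, hxX⟩
        exact ⟨hxY, hxb, fun _ => hxX⟩
    have hsdcard : (Y \ X').card = n := by
      rw [hsd, Finset.card_erase_of_mem hb, hcard]
      omega
    exact ih X' Y hX'U hYU hX'card hY hsdcard y hyX'

end Aux

/-- If `R` is a `k`-equivalence relation (sub-reflexive, perm-invariant and `k`-transitive)
and `x₁, x₂` are finite sets of cardinality `k`, then `φ_R x₁ = φ_R x₂ ↔ Φ_R (x₁ ∪ x₂)`. -/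
theorem kfun_eq_iff {α : Type*} [DecidableEq α] {k : ℕ} (hk : 1 ≤ k)
    (R : (Fin (k + 1) → α) → Prop)
    (hsubrefl : ∀ x : Fin (k + 1) → α, ¬ Function.Injective x → R x)
    (hperm : ∀ (x : Fin (k + 1) → α) (π : Equiv.Perm (Fin (k + 1))), R x → R (x ∘ π))
    (htrans : ∀ (x : Fin (k + 1) → α) (y₂ : α),
      (∀ i j : Fin k, x i.castSucc = x j.castSucc → i = j) →
      R x → R (Fin.snoc (fun i : Fin k => x i.castSucc) y₂) →
      R (Fin.snoc (fun i : Fin k => x i.succ) y₂))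
    (x₁ x₂ : Finset α) (h₁ : x₁.card = k) (h₂ : x₂.card = k) :
    KFun R x₁ = KFun R x₂ ↔ KPred R (x₁ ∪ x₂) := by
  constructor
  · -- forward: φ(x₁) = φ(x₂) → Φ(x₁ ∪ x₂)
    intro h
    have hmem : ∀ b ∈ x₂, KPred R (insert b x₁) := by
      intro b hb
      have hb2 : b ∈ KFun R x₂ := by
        show KPred R (x₂ ∪ {b})
        rw [union_singleton', Finset.insert_eq_self.mpr hb]
        exact kpred_of_card_le hsubrefl (le_of_eq h₂)
      rw [← h] at hb2
      have : KPred R (x₁ ∪ {b}) := hb2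
      rwa [union_singleton'] at this
    -- induction on subsets S of x₂ : Φ(x₁ ∪ S)
    have key : ∀ S : Finset α, S ⊆ x₂ → KPred R (x₁ ∪ S) := by
      intro S
      induction S using Finset.induction_on with
      | empty =>
        intro _
        rw [Finset.union_empty]
        exact kpred_of_card_le hsubrefl (le_of_eq h₁)
      | insert b S hbS ih =>
        intro hsub
        have hb2 : b ∈ x₂ := hsub (Finset.mem_insert_self b S)
        have hS2 : S ⊆ x₂ := (Finset.subset_insert b S).trans hsub
        have hIH : KPred R (x₁ ∪ S) := ih hS2
        by_cases hbU : b ∈ x₁ ∪ S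
        · rw [Finset.union_insert, Finset.insert_eq_self.mpr hbU]
          exact hIH
        rw [Finset.union_insert]
        intro t ht
        by_cases hinj : Function.Injective t
        swap
        · exact hsubrefl t hinj
        set T : Finset α := Finset.univ.image t with hTdef
        have hTcard : T.card = k + 1 := by
          rw [hTdef, Finset.card_image_of_injective _ hinj, Finset.card_univ, Fintype.card_fin]
        by_cases hbT : b ∈ T
        swap
        · refine hIH t fun i => ?_
          have hti : t i ∈ T := Finset.mem_image.mpr ⟨i, Finset.mem_univ i, rfl⟩
          rcases Finset.mem_insert.mp (ht i) with h' | h'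
          · exact absurd (h' ▸ hti) hbT
          · exact h'
        · set Y : Finset α := T.erase b with hYdef
          have hYcard : Y.card = k := by
            rw [hYdef, Finset.card_erase_of_mem hbT, hTcard]; omega
          have hYU : Y ⊆ x₁ ∪ S := by
            intro x hx
            have hxb : x ≠ b := (Finset.mem_erase.mp hx).1
            have hxT : x ∈ T := (Finset.mem_erase.mp hx).2
            obtain ⟨i, -, rfl⟩ := Finset.mem_image.mp hxT
            rcases Finset.mem_insert.mp (ht i) with h' | h'
            · exact absurd h' hxb
            · exact h'
          have hx₁U : x₁ ⊆ x₁ ∪ S := Finset.subset_union_left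
          have hbx₁ : KPred R (insert b x₁) := hmem b hb2
          have hbY : KPred R (insert b Y) :=
            kpred_transport hk hsubrefl hperm htrans hIH (Y \ x₁).card x₁ Y hx₁U hYU h₁
              hYcard rfl b hbx₁
          refine hbY t fun i => ?_
          have hti : t i ∈ T := Finset.mem_image.mpr ⟨i, Finset.mem_univ i, rfl⟩
          by_cases htib : t i = b
          · exact htib ▸ Finset.mem_insert_self b Y
          · exact Finset.mem_insert.mpr (Or.inr (Finset.mem_erase.mpr ⟨htib, hti⟩))
    exact key x₂ (le_refl x₂)
  · -- backward: Φ(x₁ ∪ x₂) → φ(x₁) = φ(x₂)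
    intro H
    ext y
    show KPred R (x₁ ∪ {y}) ↔ KPred R (x₂ ∪ {y})
    rw [union_singleton', union_singleton']
    constructor
    · intro hy
      exact kpred_transport hk hsubrefl hperm htrans H (x₂ \ x₁).card x₁ x₂
        Finset.subset_union_left Finset.subset_union_right h₁ h₂ rfl y hy
    · intro hy
      exact kpred_transport hk hsubrefl hperm htrans H (x₁ \ x₂).card x₂ x₁
        Finset.subset_union_right Finset.subset_union_left h₂ h₁ rfl y hy
end

section
/- Let α be a type, k ≥ 1, and let R : (Fin (k+1) → α) → Prop be a k-equivalence relation (satisfying sub-reflexivity, perm-invariance, and k-transitivity). If X and Y are finite subsets of α, each maximal with respect to inclusion among finite sets satisfying the k-predicate Φ_R, and X ≠ Y, then |X ∩ Y| < k. (Hence a k-equivalence relation is represented by a family of sets whose pairwise intersections have fewer than k elements.) -/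
lemma snoc_inj' {α : Type*} {n : ℕ} {e : Fin n → α} {u : α}
    (he : Function.Injective e) (hu : ∀ i, e i ≠ u) :
    Function.Injective (Fin.snoc e u) := by
  intro i j h
  induction i using Fin.lastCases with
  | last =>
    induction j using Fin.lastCases with
    | last => rfl
    | cast j => simp only [Fin.snoc_last, Fin.snoc_castSucc] at h; exact absurd h.symm (hu j)
  | cast i =>
    induction j using Fin.lastCases with
    | last => simp only [Fin.snoc_last, Fin.snoc_castSucc] at h; exact absurd h (hu i)
    | cast j => simp only [Fin.snoc_castSucc] at h; exact congrArg Fin.castSucc (he h)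

lemma perm_transfer' {α : Type*} {n : ℕ} (R : (Fin n → α) → Prop)
    (hperm : ∀ (x : Fin n → α) (π : Equiv.Perm (Fin n)), R x → R (x ∘ π))
    {x w : Fin n → α} (hx : Function.Injective x)
    (h : ∀ i, ∃ j, w j = x i) (hw : R w) : R x := by
  choose π hπ using h
  have hπinj : Function.Injective π := fun i j hij => hx (by rw [← hπ i, ← hπ j, hij])
  have hb : Function.Bijective π := Finite.injective_iff_bijective.mp hπinj
  have h2 := hperm w (Equiv.ofBijective π hb) hw
  rwa [show w ∘ ⇑(Equiv.ofBijective π hb) = x from funext hπ] at h2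

lemma surj_on' {α : Type*} [DecidableEq α] {n : ℕ} (S : Finset α) (hS : S.card = n)
    (w : Fin n → α) (hw : Function.Injective w) (hmem : ∀ i, w i ∈ S)
    {a : α} (ha : a ∈ S) : ∃ j, w j = a := by
  have himg : Finset.image w Finset.univ = S := by
    apply Finset.eq_of_subset_of_card_le
    · intro b hb
      simp only [Finset.mem_image, Finset.mem_univ, true_and] at hb
      obtain ⟨i, rfl⟩ := hb; exact hmem i
    · rw [hS, Finset.card_image_of_injective _ hw, Finset.card_univ, Fintype.card_fin]
  rw [← himg] at ha
  simpa using ha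

lemma enum_with_head' {α : Type*} {k : ℕ} [NeZero k] (C : Finset α) (hC : C.card = k)
    {c : α} (hc : c ∈ C) :
    ∃ e : Fin k → α, Function.Injective e ∧ (∀ i, e i ∈ C) ∧ e 0 = c := by
  let f : Fin k → α := fun i => (C.equivFin.symm (Fin.cast hC.symm i) : α)
  have hfinj : Function.Injective f := by
    intro i j hij
    have := C.equivFin.symm.injective (Subtype.coe_injective hij)
    exact Fin.cast_injective _ this
  have hfmem : ∀ i, f i ∈ C := fun i => (C.equivFin.symm (Fin.cast hC.symm i)).2
  obtain ⟨j, hj⟩ : ∃ j, f j = c := by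
    refine ⟨Fin.cast hC (C.equivFin ⟨c, hc⟩), ?_⟩
    simp [f]
  refine ⟨f ∘ (Equiv.swap 0 j), hfinj.comp (Equiv.swap 0 j).injective, fun i => hfmem _, ?_⟩
  simp [hj]

lemma exchange' {α : Type*} [DecidableEq α] {k : ℕ} (hk : 1 ≤ k)
    (R : (Fin (k + 1) → α) → Prop)
    (hsubrefl : ∀ x : Fin (k + 1) → α, ¬ Function.Injective x → R x)
    (hperm : ∀ (x : Fin (k + 1) → α) (π : Equiv.Perm (Fin (k + 1))), R x → R (x ∘ π))
    (htrans : ∀ (x : Fin (k + 1) → α) (y₂ : α),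
      (∀ i j : Fin k, x i.castSucc = x j.castSucc → i = j) →
      R x → R (Fin.snoc (fun i : Fin k => x i.castSucc) y₂) →
      R (Fin.snoc (fun i : Fin k => x i.succ) y₂))
    (U C : Finset α) (hCcard : C.card = k)
    (hFull : ∀ u ∈ U, KPred R (insert u C))
    {c : α} (hc : c ∈ C) {u : α} (hu : u ∈ U) (huC : u ∉ C) :
    ∀ v ∈ U, KPred R (insert v (insert u (C.erase c))) := by
  haveI : NeZero k := ⟨by omega⟩
  intro v hv x hxmem
  by_cases hinj : Function.Injective x
  swap
  · exact hsubrefl x hinj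
  by_cases hvc : v = c
  · subst hvc
    apply hFull u hu x
    intro i
    have h := hxmem i
    simp only [Finset.mem_insert, Finset.mem_erase] at h ⊢
    rcases h with rfl | rfl | ⟨-, h⟩
    exacts [Or.inr hc, Or.inl rfl, Or.inr h]
  by_cases hvS : v ∈ insert u (C.erase c)
  · exfalso
    have h1 : Finset.image x Finset.univ ⊆ insert u (C.erase c) := by
      intro b hb
      simp only [Finset.mem_image, Finset.mem_univ, true_and] at hb
      obtain ⟨i, rfl⟩ := hb
      have := hxmem i
      rwa [Finset.insert_eq_self.mpr hvS] at this
    have h2 := Finset.card_le_card h1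
    rw [Finset.card_image_of_injective _ hinj, Finset.card_univ, Fintype.card_fin] at h2
    have h3 : (insert u (C.erase c)).card ≤ k :=
      le_trans (Finset.card_insert_le _ _)
        (by rw [Finset.card_erase_of_mem hc, hCcard]; omega)
    omega
  have hvC : v ∉ C := fun h => hvS (Finset.mem_insert_of_mem (Finset.mem_erase.mpr ⟨hvc, h⟩))
  have hvu : v ≠ u := fun h => hvS (by rw [h]; exact Finset.mem_insert_self u _)
  obtain ⟨e, heinj, hemem, he0⟩ := enum_with_head' C hCcard hc
  set xbig : Fin (k + 1) → α := Fin.snoc e u with hxbigdef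
  have hxbiginj : Function.Injective xbig :=
    snoc_inj' heinj (fun i h => huC (h ▸ hemem i))
  have hRxbig : R xbig := by
    apply hFull u hu
    intro i
    induction i using Fin.lastCases with
    | last => simp [xbig, Fin.snoc_last]
    | cast j => simp only [xbig, Fin.snoc_castSucc]; exact Finset.mem_insert_of_mem (hemem j)
  have hcastfun : (fun i : Fin k => xbig i.castSucc) = e := funext fun i => by simp [xbig]
  have hRsnocv : R (Fin.snoc (fun i : Fin k => xbig i.castSucc) v) := by
    rw [hcastfun]
    apply hFull v hv
    intro i
    induction i using Fin.lastCases with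
    | last => simp [Fin.snoc_last]
    | cast j => simp only [Fin.snoc_castSucc]; exact Finset.mem_insert_of_mem (hemem j)
  have hdist : ∀ i j : Fin k, xbig i.castSucc = xbig j.castSucc → i = j := by
    intro i j h
    exact heinj (by simpa only [xbig, Fin.snoc_castSucc] using h)
  have hRw := htrans xbig v hdist hRxbig hRsnocv
  set tail : Fin k → α := fun i => xbig i.succ with htaildef
  have tail_spec : ∀ i : Fin k, tail i = u ∨ ∃ j : Fin k, j ≠ 0 ∧ tail i = e j := by
    intro i
    rcases Fin.eq_castSucc_or_eq_last i.succ with ⟨j, hj⟩ | hlast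
    · right
      refine ⟨j, ?_, ?_⟩
      · have hj' : (i : ℕ) + 1 = (j : ℕ) := by
          have := congrArg Fin.val hj
          simpa using this
        intro h0
        subst h0
        simp at hj'
      · simp [tail, xbig, hj, Fin.snoc_castSucc]
    · left
      simp [tail, xbig, hlast, Fin.snoc_last]
  have tailinj : Function.Injective tail := fun i j h => Fin.succ_injective _ (hxbiginj h)
  have tailmem : ∀ i, tail i ∈ insert u (C.erase c) := by
    intro i
    rcases tail_spec i with h | ⟨j, hj0, h⟩
    · rw [h]; exact Finset.mem_insert_self u _
    · rw [h]
      refine Finset.mem_insert_of_mem (Finset.mem_erase.mpr ⟨?_, hemem j⟩)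
      rw [← he0]
      exact fun hh => hj0 (heinj hh)
  have winj : Function.Injective (Fin.snoc tail v : Fin (k+1) → α) := by
    apply snoc_inj' tailinj
    intro i h
    rcases tail_spec i with h' | ⟨j, _, h'⟩
    · exact hvu (h.symm.trans h')
    · exact hvC (by rw [h] at h'; exact h' ▸ hemem j)
  have wmem : ∀ i, (Fin.snoc tail v : Fin (k+1) → α) i ∈ insert v (insert u (C.erase c)) := by
    intro i
    induction i using Fin.lastCases with
    | last => simp [Fin.snoc_last]
    | cast j => simp only [Fin.snoc_castSucc]; exact Finset.mem_insert_of_mem (tailmem j)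
  have hScard : (insert v (insert u (C.erase c))).card = k + 1 := by
    rw [Finset.card_insert_of_notMem hvS,
        Finset.card_insert_of_notMem (fun h => huC (Finset.mem_of_mem_erase h)),
        Finset.card_erase_of_mem hc, hCcard]
    omega
  exact perm_transfer' R hperm hinj
    (fun i => surj_on' _ hScard _ winj wmem (hxmem i)) hRw
/-- If `R` is a `k`-equivalence relation and `X ≠ Y` are both maximal (w.r.t. inclusion)
among finite sets satisfying the `k`-predicate `Φ_R`, then `|X ∩ Y| < k`. -/
theorem maximal_ksets_inter_lt {α : Type*} [DecidableEq α] {k : ℕ} (hk : 1 ≤ k)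
    (R : (Fin (k + 1) → α) → Prop)
    (hsubrefl : ∀ x : Fin (k + 1) → α, ¬ Function.Injective x → R x)
    (hperm : ∀ (x : Fin (k + 1) → α) (π : Equiv.Perm (Fin (k + 1))), R x → R (x ∘ π))
    (htrans : ∀ (x : Fin (k + 1) → α) (y₂ : α),
      (∀ i j : Fin k, x i.castSucc = x j.castSucc → i = j) →
      R x → R (Fin.snoc (fun i : Fin k => x i.castSucc) y₂) →
      R (Fin.snoc (fun i : Fin k => x i.succ) y₂))
    (X Y : Finset α)
    (hX : KPred R X) (hXmax : ∀ Z : Finset α, X ⊂ Z → ¬ KPred R Z)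
    (hY : KPred R Y) (hYmax : ∀ Z : Finset α, Y ⊂ Z → ¬ KPred R Z)
    (hXY : X ≠ Y) :
    (X ∩ Y).card < k := by
  by_contra hlt
  push_neg at hlt
  obtain ⟨A, hAsub, hAcard⟩ := Finset.exists_subset_card_eq hlt
  set U := X ∪ Y with hUdef
  have hFullA : ∀ u ∈ U, KPred R (insert u A) := by
    intro u hu x hxmem
    rcases Finset.mem_union.mp hu with h | h
    · apply hX x
      intro i
      rcases Finset.mem_insert.mp (hxmem i) with rfl | hi
      · exact h
      · exact (Finset.mem_inter.mp (hAsub hi)).1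
    · apply hY x
      intro i
      rcases Finset.mem_insert.mp (hxmem i) with rfl | hi
      · exact h
      · exact (Finset.mem_inter.mp (hAsub hi)).2
  have full_all : ∀ n (C : Finset α), C ⊆ U → C.card = k → (C \ A).card = n →
      ∀ u ∈ U, KPred R (insert u C) := by
    intro n
    induction n using Nat.strong_induction_on with
    | _ n ih =>
      intro C hCU hCcard hCA
      rcases Nat.eq_zero_or_pos n with rfl | hn
      · have hsub : C ⊆ A := by
          rw [← Finset.sdiff_eq_empty_iff_subset]
          exact Finset.card_eq_zero.mp hCA
        have hCA' : C = A := Finset.eq_of_subset_of_card_le hsub (by rw [hAcard, hCcard])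
        subst hCA'
        exact hFullA
      · obtain ⟨c, hcCA⟩ := Finset.card_pos.mp (hCA ▸ hn)
        have hcC : c ∈ C := (Finset.mem_sdiff.mp hcCA).1
        have hcA : c ∉ A := (Finset.mem_sdiff.mp hcCA).2
        obtain ⟨a, haAC⟩ : (A \ C).Nonempty := by
          apply Finset.sdiff_nonempty.mpr
          intro hsub
          have hAC : A = C := Finset.eq_of_subset_of_card_le hsub (by rw [hAcard, hCcard])
          exact hcA (by rw [hAC]; exact hcC)
        have haA : a ∈ A := (Finset.mem_sdiff.mp haAC).1
        have haC : a ∉ C := (Finset.mem_sdiff.mp haAC).2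
        have haU : a ∈ U := Finset.mem_union_left _ (Finset.mem_inter.mp (hAsub haA)).1
        set C' := insert a (C.erase c) with hC'def
        have hC'card : C'.card = k := by
          rw [hC'def, Finset.card_insert_of_notMem (fun h => haC (Finset.mem_of_mem_erase h)),
            Finset.card_erase_of_mem hcC, hCcard]
          omega
        have hC'U : C' ⊆ U := by
          intro b hb
          rcases Finset.mem_insert.mp hb with rfl | hb
          · exact haU
          · exact hCU (Finset.mem_of_mem_erase hb)
        have hC'A : (C' \ A).card < n := by
          have heq : C' \ A = (C \ A).erase c := by
            ext b
            simp only [hC'def, Finset.mem_sdiff, Finset.mem_insert, Finset.mem_erase]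
            constructor
            · rintro ⟨rfl | ⟨hbc, hbC⟩, hbA⟩
              · exact absurd haA hbA
              · exact ⟨hbc, hbC, hbA⟩
            · rintro ⟨hbc, hbC, hbA⟩
              exact ⟨Or.inr ⟨hbc, hbC⟩, hbA⟩
          rw [heq, Finset.card_erase_of_mem hcCA, hCA]
          omega
        have hFullC' := ih _ hC'A C' hC'U hC'card rfl
        have hca : c ≠ a := fun h => hcA (h ▸ haA)
        have hcC' : c ∉ C' := by
          intro h
          rcases Finset.mem_insert.mp h with h | h
          · exact hca h
          · exact (Finset.mem_erase.mp h).1 rfl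
        have hcU : c ∈ U := hCU hcC
        have key := exchange' hk R hsubrefl hperm htrans U C' hC'card hFullC'
          (Finset.mem_insert_self a _) hcU hcC'
        have hCeq : insert c (C'.erase a) = C := by
          have h1 : C'.erase a = C.erase c :=
            Finset.erase_insert (fun h => haC (Finset.mem_of_mem_erase h))
          rw [h1, Finset.insert_erase hcC]
        intro u hu
        have hres := key u hu
        rwa [hCeq] at hres
  have hKU : KPred R U := by
    intro x hxmem
    by_cases hinj : Function.Injective x
    swap
    · exact hsubrefl x hinj
    set S := Finset.image x Finset.univ with hSdef
    have hSU : S ⊆ U := by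
      intro b hb
      simp only [hSdef, Finset.mem_image, Finset.mem_univ, true_and] at hb
      obtain ⟨i, rfl⟩ := hb
      exact hxmem i
    have hScard : S.card = k + 1 := by
      rw [hSdef, Finset.card_image_of_injective _ hinj, Finset.card_univ, Fintype.card_fin]
    have hx0 : x 0 ∈ S := Finset.mem_image.mpr ⟨0, Finset.mem_univ _, rfl⟩
    have hCc : (S.erase (x 0)).card = k := by
      rw [Finset.card_erase_of_mem hx0, hScard]
      omega
    have hmain := full_all _ (S.erase (x 0)) ((Finset.erase_subset _ _).trans hSU) hCc rfl
      (x 0) (hSU hx0)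
    apply hmain x
    intro i
    rw [Finset.insert_erase hx0]
    exact Finset.mem_image.mpr ⟨i, Finset.mem_univ _, rfl⟩
  by_cases hYX : Y ⊆ X
  · exact hYmax X (Finset.ssubset_iff_subset_ne.mpr ⟨hYX, Ne.symm hXY⟩) hX
  · have hXU : X ⊂ U := by
      refine Finset.ssubset_iff_subset_ne.mpr ⟨Finset.subset_union_left, ?_⟩
      intro h
      apply hYX
      have h2 : Y ⊆ X ∪ Y := Finset.subset_union_right
      rw [← hUdef, ← h] at h2
      exact h2
    exact hXmax U hXU hKU
end

section
/- Let s₀, s₁, …, s_{n−1} be finite subsets of a type α (n ≥ 1), each of cardinality k + 1, and suppose that for every i with 1 ≤ i ≤ n − 1 the intersection of s_i with the partial union s₀ ∪ ⋯ ∪ s_{i−1} has at least k elements. Then the cardinality of s₀ ∪ s₁ ∪ ⋯ ∪ s_{n−1} is at most n + k. (Hence the largest k-set produced by the KDecide procedure from n hypotheses has at most n + k elements.) -/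
/-- If `s 0, …, s (n-1)` are finsets each of cardinality `k + 1`, and each `s i` (for
`1 ≤ i < n`) meets the partial union `s 0 ∪ ⋯ ∪ s (i-1)` in at least `k` elements, then the
union of all of them has at most `n + k` elements. -/
theorem card_union_le_of_overlaps {α : Type*} [DecidableEq α] {k n : ℕ} (hn : 1 ≤ n)
    (s : ℕ → Finset α) (hcard : ∀ i, i < n → (s i).card = k + 1)
    (hoverlap : ∀ i, 1 ≤ i → i < n → k ≤ (s i ∩ (Finset.range i).biUnion s).card) :
    ((Finset.range n).biUnion s).card ≤ n + k := by
  induction n with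
  | zero => omega
  | succ m ih =>
    rcases Nat.eq_or_lt_of_le hn with h1 | h1
    · obtain rfl : m = 0 := by omega
      simp [Finset.range_one, hcard 0 (by omega)]
    · have hm : 1 ≤ m := by omega
      have ihm := ih hm (fun i hi => hcard i (by omega))
        (fun i h1 h2 => hoverlap i h1 (by omega))
      rw [Finset.range_add_one, Finset.biUnion_insert]
      have hkey := Finset.card_union_add_card_inter (s m) ((Finset.range m).biUnion s)
      have h2 := hoverlap m hm (by omega)
      have h3 := hcard m (by omega)
      omega
end

section
/- Let α be a type, k ≥ 1, and let R : (Fin (k+1) → α) → Prop be a relation satisfying sub-reflexivity and perm-invariance. Then for every injective tuple x : Fin (k+1) → α, the k-predicate Φ_R holds of the image set {x₀, x₁, …, x_k} if and only if R(x) holds. -/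
/-- If `R` satisfies sub-reflexivity and perm-invariance, then for any injective
`(k+1)`-tuple `x`, the `k`-predicate holds of the image set `{x 0, …, x k}` iff `R x`. -/
theorem kpred_image_iff {α : Type*} [DecidableEq α] {k : ℕ} (hk : 1 ≤ k)
    (R : (Fin (k + 1) → α) → Prop)
    (hsubrefl : ∀ x : Fin (k + 1) → α, ¬ Function.Injective x → R x)
    (hperm : ∀ (x : Fin (k + 1) → α) (π : Equiv.Perm (Fin (k + 1))), R x → R (x ∘ π))
    (x : Fin (k + 1) → α) (hx : Function.Injective x) :
    KPred R (Finset.univ.image x) ↔ R x := by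
  constructor
  · intro h
    exact h x (fun i => Finset.mem_image_of_mem x (Finset.mem_univ i))
  · intro hR y hy
    by_cases hyinj : Function.Injective y
    · have hσ : ∀ i, ∃ j, x j = y i := by
        intro i
        obtain ⟨j, _, hj⟩ := Finset.mem_image.mp (hy i)
        exact ⟨j, hj⟩
      choose σ hσ using hσ
      have hσinj : Function.Injective σ := fun a b hab => by
        apply hyinj
        rw [← hσ a, ← hσ b, hab]
      have hσbij : Function.Bijective σ := (Finite.injective_iff_bijective).mp hσinj
      have : y = x ∘ (Equiv.ofBijective σ hσbij) := by
        funext i; exact (hσ i).symm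
      rw [this]
      exact hperm x _ hR
    · exact hsubrefl y hyinj
end
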